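/- Let K ≥ 1 be an integer and let ρ ≥ 1. Define the sequence x_1 = √((ρ − 1)/ρ), x_{k+1} = √((x_k − 1)/ρ + 1), and set ζ(ρ, K) := Σ_{k=1}^{K} x_k and η(ρ, K) := 1/((2ρ − 1)(2ρ)^K) + K² 2^{−K}/(2ρ − 1) + K 2^{−K}/((2ρ − 1)² (2ρ)^K). Then the unique two-choice profile for (ρ, K) satisfies ζ(ρ, K) ≤ Σ_{k=1}^{K} ν_{ρ,K}(k) ≤ K − 1/(2ρ − 1) + η(ρ, K). -/

import Mathlib

/-!
Summing the recursion telescopically gives `v_{k+1} = ρ (v_k² − v_K²)`, and at `k = 0` this pins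
`ρ v_K² = ρ − 1 + c` with `c = 1 − v_1 ≥ 0`.

*Lower bound.* Since `v_K² ≥ (ρ − 1)/ρ`, the reversed profile `v_K, v_{K−1}, …` dominates the
iteration `x ↦ √((x − 1)/ρ + 1)` started at `√((ρ − 1)/ρ)`, i.e. `v_{K+1−k} ≥ x_k`.

*Upper bound.* From `1 − v_{k+1} = ρ (1 − v_k²) + c ≤ 2ρ (1 − v_k) + c`, the defects `1 − v_k`
read backwards from `1 − v_{K+1} = 1` dominate `(2ρ)^{-m} − c/(2ρ − 1)`; summing gives the bound up
to `K c/(2ρ − 1)`. Finally `c ≤ v_K²` and `v_{k+1} ≤ v_k²` give `c ≤ (1 − c)^{2^K} ≤ e^{−c 2^K}`,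
which forces `c ≤ K 2^{−K}`.
-/

open Finset Real

noncomputable section

/-- Extend a vector `v = (v_0, …, v_K) ∈ ℝ^{K+1}` to `ℕ → ℝ` by zero,
implementing the convention `v_{K+1} = 0`. -/
def extProfile (K : ℕ) (v : Fin (K + 1) → ℝ) : ℕ → ℝ :=
  fun k => if h : k < K + 1 then v ⟨k, h⟩ else 0

/-- `v = (v_0, …, v_K)` is a two-choice profile for `(ρ, K)`:
`1 = v_0 ≥ v_1 ≥ … ≥ v_K ≥ 0` and, with the convention `v_{K+1} = 0`,
`v_k − v_{k+1} = ρ (v_{k−1}² − v_k²)` for every `1 ≤ k ≤ K`. -/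
def IsTwoChoiceProfile (ρ : ℝ) (K : ℕ) (v : Fin (K + 1) → ℝ) : Prop :=
  extProfile K v 0 = 1 ∧
  (∀ k < K, extProfile K v (k + 1) ≤ extProfile K v k) ∧
  0 ≤ extProfile K v K ∧
  ∀ k, 1 ≤ k → k ≤ K →
    extProfile K v k - extProfile K v (k + 1) =
      ρ * ((extProfile K v (k - 1)) ^ 2 - (extProfile K v k) ^ 2)

/-- When it exists, the unique two-choice profile for `(ρ, K)`, denoted `ν_{ρ,K}`. -/
def nu (ρ : ℝ) (K : ℕ) : Fin (K + 1) → ℝ :=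
  Classical.epsilon (IsTwoChoiceProfile ρ K)

/-- `ν_{ρ,K}` viewed as a function on `ℕ` (with `ν_{ρ,K}(K+1) = 0`). -/
def nuV (ρ : ℝ) (K : ℕ) : ℕ → ℝ := extProfile K (nu ρ K)

/-- `P(ρ, K) = (1 − ν_{ρ,K}(1)) + ν_{ρ,K}(K)`, the limiting proportion of
problematic (empty or full) queues. -/
def propProblematic (ρ : ℝ) (K : ℕ) : ℝ := (1 - nuV ρ K 1) + nuV ρ K K

/-- The sequence `x_1 = √((ρ − 1)/ρ)`, `x_{k+1} = √((x_k − 1)/ρ + 1)`,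
indexed so that `xSeq ρ (k - 1) = x_k`. -/
def xSeq (ρ : ℝ) : ℕ → ℝ
  | 0 => Real.sqrt ((ρ - 1) / ρ)
  | k + 1 => Real.sqrt ((xSeq ρ k - 1) / ρ + 1)

/-- `ζ(ρ, K) = Σ_{k=1}^K x_k`. -/
def zetaFn (ρ : ℝ) (K : ℕ) : ℝ := ∑ k ∈ Finset.range K, xSeq ρ k

/-- `η(ρ, K)`. -/
def etaFn (ρ : ℝ) (K : ℕ) : ℝ :=
  1 / ((2 * ρ - 1) * (2 * ρ) ^ K) + (K : ℝ) ^ 2 * (2 : ℝ) ^ (-(K : ℤ)) / (2 * ρ - 1) +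
    (K : ℝ) * (2 : ℝ) ^ (-(K : ℤ)) / ((2 * ρ - 1) ^ 2 * (2 * ρ) ^ K)

lemma sum_Icc_one_eq_sum_range_sub {M : Type*} [AddCommMonoid M] (f : ℕ → M) (K : ℕ) :
    ∑ k ∈ Icc 1 K, f k = ∑ m ∈ range K, f (K - m) := by
  induction K with
  | zero => simp
  | succ n ih =>
    rw [sum_Icc_succ_top (by omega), ih, sum_range_succ']
    simp [Nat.succ_sub_succ]

lemma geom_sum_inv_pow_succ {a : ℝ} (ha : 1 < a) (n : ℕ) :
    ∑ m ∈ range n, (a⁻¹) ^ (m + 1) = (1 - (a⁻¹) ^ n) / (a - 1) := by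
  have ha0 : a ≠ 0 := by positivity
  have ha1 : a - 1 ≠ 0 := by linarith
  induction n with
  | zero => simp
  | succ n ih =>
    rw [sum_range_succ, ih, pow_succ]
    field_simp
    ring

lemma le_pow_two_pow_of_le_sq {R : Type*} [CommSemiring R] [PartialOrder R] [IsOrderedRing R]
    {u : ℕ → R} {N : ℕ} (hnn : ∀ n, 0 ≤ u n) (hu : ∀ n < N, u (n + 1) ≤ u n ^ 2) :
    u N ≤ u 0 ^ 2 ^ N := by
  induction N with
  | zero => simp
  | succ N ih =>
    calc u (N + 1) ≤ u N ^ 2 := hu N N.lt_succ_self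
      _ ≤ (u 0 ^ 2 ^ N) ^ 2 :=
        pow_le_pow_left₀ (hnn N) (ih fun n hn => hu n (hn.trans N.lt_succ_self)) 2
      _ = u 0 ^ 2 ^ (N + 1) := by rw [← pow_mul, pow_succ]

lemma le_div_two_pow_of_le_one_sub_pow {c : ℝ} {K : ℕ} (hK : 1 ≤ K) (hc1 : c ≤ 1)
    (hc : c ≤ (1 - c) ^ 2 ^ K) : c ≤ K / 2 ^ K := by
  by_contra! hlt
  have h2K : (0 : ℝ) < 2 ^ K := by positivity
  have hKc : (K : ℝ) < c * 2 ^ K := (div_lt_iff₀ h2K).mp hlt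
  have hexp : (1 - c) ^ 2 ^ K ≤ exp (-(c * 2 ^ K)) := by
    have h := one_sub_div_pow_le_exp_neg (n := 2 ^ K) (t := c * 2 ^ K) (by push_cast; nlinarith)
    push_cast at h
    rwa [mul_div_cancel_right₀ c h2K.ne'] at h
  have hexpK : exp (-(K : ℝ)) ≤ 1 / 2 ^ K := by
    rw [exp_neg, ← exp_one_pow, one_div]
    have : (2 : ℝ) ≤ exp 1 := by linarith [add_one_le_exp 1]
    gcongr
  have hK1 : (1 : ℝ) / 2 ^ K ≤ K / 2 ^ K := by
    gcongr
    exact_mod_cast hK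
  linarith [exp_lt_exp.mpr (neg_lt_neg hKc)]

lemma extProfile_of_lt {K k : ℕ} (v : Fin (K + 1) → ℝ) (hk : K < k) : extProfile K v k = 0 :=
  dif_neg (by omega)

namespace IsTwoChoiceProfile

variable {ρ : ℝ} {K : ℕ} {v : Fin (K + 1) → ℝ}

lemma antitone (hv : IsTwoChoiceProfile ρ K v) : Antitone (extProfile K v) := by
  refine antitone_nat_of_succ_le fun n => ?_
  rcases lt_trichotomy n K with hn | rfl | hn
  · exact hv.2.1 n hn
  · rw [extProfile_of_lt v n.lt_succ_self]
    exact hv.2.2.1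
  · rw [extProfile_of_lt v hn, extProfile_of_lt v (hn.trans n.lt_succ_self)]

lemma le_one (hv : IsTwoChoiceProfile ρ K v) (k : ℕ) : extProfile K v k ≤ 1 :=
  hv.1 ▸ hv.antitone k.zero_le

lemma nonneg (hv : IsTwoChoiceProfile ρ K v) (k : ℕ) : 0 ≤ extProfile K v k := by
  rcases le_or_gt k K with hk | hk
  · exact hv.2.2.1.trans (hv.antitone hk)
  · exact (extProfile_of_lt v hk).ge

lemma sq_le_one (hv : IsTwoChoiceProfile ρ K v) (k : ℕ) : extProfile K v k ^ 2 ≤ 1 :=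
  pow_le_one₀ (hv.nonneg k) (hv.le_one k)

lemma succ_eq (hv : IsTwoChoiceProfile ρ K v) {k : ℕ} (hk : k ≤ K) :
    extProfile K v (k + 1) = ρ * (extProfile K v k ^ 2 - extProfile K v K ^ 2) := by
  refine Nat.decreasingInduction (fun k hk ih => ?_) ?_ hk
  · have h := hv.2.2.2 (k + 1) (by omega) hk
    simp only [Nat.add_sub_cancel] at h
    linear_combination h + ih
  · simp [extProfile_of_lt v K.lt_succ_self]

lemma mul_sq_last (hv : IsTwoChoiceProfile ρ K v) :
    ρ * extProfile K v K ^ 2 = ρ - 1 + (1 - extProfile K v 1) := by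
  have h := hv.succ_eq K.zero_le
  rw [hv.1] at h
  linarith

lemma one_sub_succ_eq (hv : IsTwoChoiceProfile ρ K v) {k : ℕ} (hk : k ≤ K) :
    1 - extProfile K v (k + 1) = ρ * (1 - extProfile K v k ^ 2) + (1 - extProfile K v 1) := by
  linear_combination hv.mul_sq_last - hv.succ_eq hk

lemma xSeq_le (hv : IsTwoChoiceProfile ρ K v) (hρ : 0 < ρ) {m : ℕ} (hm : m < K) :
    xSeq ρ m ≤ extProfile K v (K - m) := by
  have hlast : (ρ - 1) / ρ ≤ extProfile K v K ^ 2 := by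
    rw [div_le_iff₀ hρ]
    linarith [hv.mul_sq_last, hv.le_one 1]
  have hf : Monotone fun t => √((t - 1) / ρ + 1) := fun s t hst => by
    dsimp only
    gcongr
  refine hf.seq_le_seq (x := xSeq ρ) (y := fun m => extProfile K v (K - m)) m ?_
    (fun _ _ => le_rfl) fun k hk => ?_
  · rw [xSeq, Nat.sub_zero, sqrt_le_left (hv.nonneg K)]
    exact hlast
  · rw [show K - k = K - (k + 1) + 1 by omega]
    set j := K - (k + 1)
    rw [sqrt_le_left (hv.nonneg j), hv.succ_eq (by omega),
      sub_div, mul_div_cancel_left₀ _ hρ.ne']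
    linarith [hlast, sub_div ρ 1 ρ, div_self hρ.ne']

lemma zetaFn_le_sum_Icc (hv : IsTwoChoiceProfile ρ K v) (hρ : 0 < ρ) :
    zetaFn ρ K ≤ ∑ k ∈ Icc 1 K, extProfile K v k := by
  rw [zetaFn, sum_Icc_one_eq_sum_range_sub]
  exact sum_le_sum fun m hm => hv.xSeq_le hρ (mem_range.mp hm)

lemma one_sub_succ_le (hv : IsTwoChoiceProfile ρ K v) (hρ : 0 ≤ ρ) {k : ℕ} (hk : k ≤ K) :
    1 - extProfile K v (k + 1) ≤ 2 * ρ * (1 - extProfile K v k) + (1 - extProfile K v 1) := by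
  rw [hv.one_sub_succ_eq hk]
  nlinarith [mul_nonneg hρ (sq_nonneg (1 - extProfile K v k))]

lemma inv_pow_sub_le_one_sub (hv : IsTwoChoiceProfile ρ K v) (hρ : 1 ≤ ρ) {m : ℕ} (hm : m ≤ K) :
    (2 * ρ)⁻¹ ^ m - (1 - extProfile K v 1) / (2 * ρ - 1) ≤ 1 - extProfile K v (K + 1 - m) := by
  set c := 1 - extProfile K v 1
  have h2ρ : 0 < 2 * ρ := by linarith
  have hf : Monotone fun t => (t - c) / (2 * ρ) := fun s t hst => by
    dsimp only
    gcongr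
  refine hf.seq_le_seq (x := fun m => (2 * ρ)⁻¹ ^ m - c / (2 * ρ - 1))
    (y := fun m => 1 - extProfile K v (K + 1 - m)) m ?_ (fun k _ => ?_) fun k hk => ?_
  · have : 0 ≤ c / (2 * ρ - 1) := div_nonneg (by linarith [hv.le_one 1]) (by linarith)
    rw [extProfile_of_lt v (by omega)]
    simpa using this
  · have : 2 * ρ - 1 ≠ 0 := by linarith
    apply le_of_eq
    rw [pow_succ]
    field_simp
    ring
  · rw [div_le_iff₀ h2ρ, show K + 1 - k = K - k + 1 by omega, show K + 1 - (k + 1) = K - k by omega]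
    linarith [hv.one_sub_succ_le (by linarith) (k := K - k) (by omega)]

lemma sum_Icc_le (hv : IsTwoChoiceProfile ρ K v) (hρ : 1 ≤ ρ) :
    ∑ k ∈ Icc 1 K, extProfile K v k ≤
      K - 1 / (2 * ρ - 1) + 1 / ((2 * ρ - 1) * (2 * ρ) ^ K) +
        K * (1 - extProfile K v 1) / (2 * ρ - 1) := by
  have hdefect : ∑ m ∈ range K, ((2 * ρ)⁻¹ ^ (m + 1) - (1 - extProfile K v 1) / (2 * ρ - 1)) ≤
      ∑ k ∈ Icc 1 K, (1 - extProfile K v k) := by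
    rw [sum_Icc_one_eq_sum_range_sub]
    refine sum_le_sum fun m hm => ?_
    have h := hv.inv_pow_sub_le_one_sub hρ (m := m + 1) (mem_range.mp hm)
    rwa [show K + 1 - (m + 1) = K - m by omega] at h
  rw [sum_sub_distrib, sum_const, card_range, geom_sum_inv_pow_succ (by linarith), sum_sub_distrib,
    sum_const, Nat.card_Icc, nsmul_eq_mul, nsmul_eq_mul, Nat.add_sub_cancel, inv_pow] at hdefect
  have h2ρ1 : 2 * ρ - 1 ≠ 0 := by linarith
  have h2ρK : (2 * ρ) ^ K ≠ 0 := by positivity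
  have : (1 - ((2 * ρ) ^ K)⁻¹) / (2 * ρ - 1) = 1 / (2 * ρ - 1) - 1 / ((2 * ρ - 1) * (2 * ρ) ^ K) := by
    field_simp
  rw [this, mul_one] at hdefect
  linarith [mul_div_assoc (K : ℝ) (1 - extProfile K v 1) (2 * ρ - 1)]

lemma succ_le_sq (hv : IsTwoChoiceProfile ρ K v) (hρ : 1 ≤ ρ) {k : ℕ} (hk : k ≤ K) :
    extProfile K v (k + 1) ≤ extProfile K v k ^ 2 := by
  nlinarith [hv.succ_eq hk, hv.mul_sq_last, hv.le_one 1,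
    mul_nonneg (sub_nonneg.mpr hρ) (sub_nonneg.mpr (hv.sq_le_one k))]

lemma one_sub_le_sq_last (hv : IsTwoChoiceProfile ρ K v) (hρ : 1 ≤ ρ) :
    1 - extProfile K v 1 ≤ extProfile K v K ^ 2 := by
  nlinarith [hv.mul_sq_last, mul_nonneg (sub_nonneg.mpr hρ) (sub_nonneg.mpr (hv.sq_le_one K))]

lemma one_sub_le_div_two_pow (hv : IsTwoChoiceProfile ρ K v) (hK : 1 ≤ K) (hρ : 1 ≤ ρ) :
    1 - extProfile K v 1 ≤ K / 2 ^ K := by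
  refine le_div_two_pow_of_le_one_sub_pow hK (by linarith [hv.nonneg 1]) ?_
  rw [sub_sub_cancel]
  obtain ⟨N, rfl⟩ : ∃ N, K = N + 1 := ⟨K - 1, by omega⟩
  have hchain : extProfile (N + 1) v (N + 1) ≤ extProfile (N + 1) v 1 ^ 2 ^ N :=
    le_pow_two_pow_of_le_sq (u := fun n => extProfile (N + 1) v (n + 1)) (fun n => hv.nonneg _)
      fun n hn => hv.succ_le_sq hρ (by omega)
  calc 1 - extProfile (N + 1) v 1 ≤ extProfile (N + 1) v (N + 1) ^ 2 := hv.one_sub_le_sq_last hρ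
    _ ≤ (extProfile (N + 1) v 1 ^ 2 ^ N) ^ 2 := pow_le_pow_left₀ (hv.nonneg _) hchain 2
    _ = extProfile (N + 1) v 1 ^ 2 ^ (N + 1) := by rw [← pow_mul, pow_succ]

end IsTwoChoiceProfile

/-- for `ρ ≥ 1`,
`ζ(ρ, K) ≤ Σ_{k=1}^K ν_{ρ,K}(k) ≤ K − 1/(2ρ − 1) + η(ρ, K)`. -/
theorem sum_profile_bounds_supercritical (K : ℕ) (hK : 1 ≤ K) (ρ : ℝ) (hρ : 1 ≤ ρ)
    (v : Fin (K + 1) → ℝ) (hv : IsTwoChoiceProfile ρ K v) :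
    zetaFn ρ K ≤ ∑ k ∈ Finset.Icc 1 K, extProfile K v k ∧
    ∑ k ∈ Finset.Icc 1 K, extProfile K v k ≤ (K : ℝ) - 1 / (2 * ρ - 1) + etaFn ρ K := by
  refine ⟨hv.zetaFn_le_sum_Icc (by linarith), ?_⟩
  have h2ρ1 : 0 < 2 * ρ - 1 := by linarith
  have hdefect : (K : ℝ) * (1 - extProfile K v 1) / (2 * ρ - 1) ≤
      (K : ℝ) ^ 2 * (2 : ℝ) ^ (-(K : ℤ)) / (2 * ρ - 1) := by
    rw [zpow_neg, zpow_natCast, sq, mul_assoc, ← div_eq_mul_inv]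
    gcongr
    exact hv.one_sub_le_div_two_pow hK hρ
  have hlast : 0 ≤ (K : ℝ) * (2 : ℝ) ^ (-(K : ℤ)) / ((2 * ρ - 1) ^ 2 * (2 * ρ) ^ K) := by
    positivity
  rw [etaFn]
  linarith [hv.sum_Icc_le hρ]
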